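/- Let q ∈ ℕ, θ ∈ (Fin q → ℝ), and let φ : ℝ → (Fin q → ℝ) be continuous; set y(t) := φ(t) ⬝ᵥ θ. Let F : ℝ → Matrix (Fin q) (Fin q) ℝ be invertible-valued with, for every t ∈ ℝ, derivative −F(t)·Φ(t)·F(t) at t, and let θ̂ : ℝ → (Fin q → ℝ) have, for every t ∈ ℝ, derivative (y(t) − φ(t) ⬝ᵥ θ̂(t)) • (F(t) *ᵥ φ(t)) at t. Suppose there exist T_c > 0 and ρ > 0 such that ∫₀^{T_c} Φ(τ)dτ − ρ·1 is positive semidefinite. Then for every t ≥ T_c, the matrix 1 − F(t)·(F(0))⁻¹ is invertible and θ = (1 − F(t)·(F(0))⁻¹)⁻¹ *ᵥ (θ̂(t) − (F(t)·(F(0))⁻¹) *ᵥ θ̂(0)). In particular the unknown parameter vector θ is exactly recovered from measurable quantities at the finite time T_c. -/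

import Mathlib

open Matrix MeasureTheory

attribute [local instance] Matrix.normedAddCommGroup Matrix.normedSpace

section Aux

variable {q : ℕ}

private noncomputable instance matrixENormedAddMonoid' : ENormedAddMonoid (Matrix (Fin q) (Fin q) ℝ) :=
  (@NormedAddCommGroup.toENormedAddCommMonoid _ Matrix.normedAddCommGroup).toENormedAddMonoid

private lemma matrix_mul_hasDerivAt' {A B : ℝ → Matrix (Fin q) (Fin q) ℝ}
    {A' B' : Matrix (Fin q) (Fin q) ℝ} {t : ℝ}
    (hA : HasDerivAt A A' t) (hB : HasDerivAt B B' t) :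
    HasDerivAt (fun s => A s * B s) (A' * B t + A t * B') t := by
  refine hasDerivAt_pi.mpr ?_; intro i; refine hasDerivAt_pi.mpr ?_; intro j
  simp only [Matrix.mul_apply, Matrix.add_apply]
  have h := HasDerivAt.fun_sum (u := Finset.univ)
      (A := fun k s => A s i k * B s k j)
      (A' := fun k => A' i k * B t k j + A t i k * B' k j)
      (fun k _ =>
        (hasDerivAt_pi.mp (hasDerivAt_pi.mp hA i) k).mul
        (hasDerivAt_pi.mp (hasDerivAt_pi.mp hB k) j))
  convert h using 1
  rw [Finset.sum_add_distrib]

private lemma mulVec_hasDerivAt' {A : ℝ → Matrix (Fin q) (Fin q) ℝ} {v : ℝ → Fin q → ℝ}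
    {A' : Matrix (Fin q) (Fin q) ℝ} {v' : Fin q → ℝ} {t : ℝ}
    (hA : HasDerivAt A A' t) (hv : HasDerivAt v v' t) :
    HasDerivAt (fun s => A s *ᵥ v s) (A' *ᵥ v t + A t *ᵥ v') t := by
  rw [hasDerivAt_pi]; intro i
  simp only [Matrix.mulVec, dotProduct, Pi.add_apply]
  have h := HasDerivAt.fun_sum (u := Finset.univ)
      (A := fun k s => A s i k * v s k)
      (A' := fun k => A' i k * v t k + A t i k * v' k)
      (fun k _ =>
        (hasDerivAt_pi.mp (hasDerivAt_pi.mp hA i) k).mul (hasDerivAt_pi.mp hv k))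
  convert h using 1
  rw [Finset.sum_add_distrib]

private lemma det_differentiableAt' {M : ℝ → Matrix (Fin q) (Fin q) ℝ} {t : ℝ}
    (h : ∀ i j, DifferentiableAt ℝ (fun s => M s i j) t) :
    DifferentiableAt ℝ (fun s => (M s).det) t := by
  simp only [Matrix.det_apply]
  apply DifferentiableAt.fun_sum
  intro σ _
  simp only [Units.smul_def, zsmul_eq_mul]
  exact (differentiableAt_const _).mul (DifferentiableAt.fun_finsetProd (fun i _ => h (σ i) i))

private lemma inv_differentiableAt' {F : ℝ → Matrix (Fin q) (Fin q) ℝ} {t : ℝ}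
    (hd : ∀ i j, DifferentiableAt ℝ (fun s => F s i j) t)
    (hu : IsUnit ((F t).det)) :
    DifferentiableAt ℝ (fun s => (F s)⁻¹) t := by
  have hadj : ∀ i j, DifferentiableAt ℝ (fun s => (F s).adjugate i j) t := by
    intro i j
    simp only [Matrix.adjugate_apply]
    apply det_differentiableAt'
    intro k l
    by_cases hk : k = j
    · subst hk; simp only [Matrix.updateRow_self]
      exact differentiableAt_const _
    · simp only [Matrix.updateRow_ne hk]; exact hd k l
  have hdet : DifferentiableAt ℝ (fun s => (F s).det) t := det_differentiableAt' hd
  have : (fun s => (F s)⁻¹) = fun s => Ring.inverse ((F s).det) • (F s).adjugate := by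
    funext s; rw [Matrix.inv_def]
  rw [this]
  simp only [Ring.inverse_eq_inv']
  apply DifferentiableAt.fun_smul
  · exact hdet.inv (IsUnit.ne_zero hu)
  · refine differentiableAt_pi.mpr ?_; intro i; refine differentiableAt_pi.mpr ?_; intro j
    exact hadj i j

private lemma vecMulVec_mulVec' (u w : Fin q → ℝ) :
    vecMulVec u u *ᵥ w = (u ⬝ᵥ w) • u := by
  funext i
  simp only [Matrix.mulVec, dotProduct, Matrix.vecMulVec_apply, Pi.smul_apply,
    smul_eq_mul, Finset.mul_sum, Finset.sum_mul]
  refine Finset.sum_congr rfl fun j _ => by ring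

/-- The quadratic form as a continuous linear map on matrices. -/
private noncomputable def quadCLM (x : Fin q → ℝ) :
    Matrix (Fin q) (Fin q) ℝ →L[ℝ] ℝ :=
  LinearMap.toContinuousLinearMap
    { toFun := fun M => x ⬝ᵥ M *ᵥ x
      map_add' := fun M N => by
        show x ⬝ᵥ (M + N) *ᵥ x = x ⬝ᵥ M *ᵥ x + x ⬝ᵥ N *ᵥ x
        rw [Matrix.add_mulVec, dotProduct_add]
      map_smul' := fun c M => by
        show x ⬝ᵥ (c • M) *ᵥ x = c • (x ⬝ᵥ M *ᵥ x)
        rw [Matrix.smul_mulVec, dotProduct_smul, smul_eq_mul] }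

/-- Transpose as a continuous linear map on matrices. -/
private noncomputable def transposeCLM :
    Matrix (Fin q) (Fin q) ℝ →L[ℝ] Matrix (Fin q) (Fin q) ℝ :=
  LinearMap.toContinuousLinearMap
    { toFun := fun M => Mᵀ
      map_add' := fun M N => Matrix.transpose_add M N
      map_smul' := fun c M => Matrix.transpose_smul c M }

private lemma posSemidef_intervalIntegral_vecMulVec {φ : ℝ → Fin q → ℝ}
    (hφ : Continuous φ) {a b : ℝ} (hab : a ≤ b) :
    (∫ τ in a..b, vecMulVec (φ τ) (φ τ)).PosSemidef := by
  have hΦc : Continuous fun τ => vecMulVec (φ τ) (φ τ) := hφ.matrix_vecMulVec hφ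
  have hint : IntervalIntegrable (fun τ => vecMulVec (φ τ) (φ τ)) volume a b :=
    hΦc.intervalIntegrable a b
  rw [Matrix.posSemidef_iff_dotProduct_mulVec]
  constructor
  · -- Hermitian
    have h := (transposeCLM (q := q)).intervalIntegral_comp_comm hint
    have heq : (∫ τ in a..b, vecMulVec (φ τ) (φ τ))ᵀ
        = ∫ τ in a..b, (vecMulVec (φ τ) (φ τ))ᵀ := h.symm
    show _ᴴ = _
    rw [show ((∫ τ in a..b, vecMulVec (φ τ) (φ τ)))ᴴ
        = (∫ τ in a..b, vecMulVec (φ τ) (φ τ))ᵀ from by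
      ext i j; simp [Matrix.conjTranspose_apply]]
    rw [heq]
    congr 1
    funext τ
    ext i j
    simp [Matrix.vecMulVec_apply, mul_comm]
  · intro x
    have h := (quadCLM x).intervalIntegral_comp_comm hint
    have heq : x ⬝ᵥ (∫ τ in a..b, vecMulVec (φ τ) (φ τ)) *ᵥ x
        = ∫ τ in a..b, x ⬝ᵥ (vecMulVec (φ τ) (φ τ)) *ᵥ x := h.symm
    have hsq : ∀ τ, x ⬝ᵥ (vecMulVec (φ τ) (φ τ)) *ᵥ x = (φ τ ⬝ᵥ x) ^ 2 := by
      intro τ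
      rw [vecMulVec_mulVec', dotProduct_smul, smul_eq_mul, dotProduct_comm]
      ring
    have : (0 : ℝ) ≤ ∫ τ in a..b, x ⬝ᵥ (vecMulVec (φ τ) (φ τ)) *ᵥ x := by
      apply intervalIntegral.integral_nonneg hab
      intro u _
      rw [hsq u]; positivity
    simpa [heq] using this

end Aux

/-- Finite-convergence-time property of the unnormalized LS estimator without
forgetting factor (Tao's Lemma 3.5): under interval excitation the matrix
`I − F(t)F(0)⁻¹` is invertible for `t ≥ T_c` and the true parameter vector is
exactly recovered as `θ = (I − F(t)F(0)⁻¹)⁻¹ (θ̂(t) − F(t)F(0)⁻¹ θ̂(0))`. -/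
theorem ls_finite_convergence_time
    (q : ℕ) (θ : Fin q → ℝ) (φ : ℝ → Fin q → ℝ) (hφ : Continuous φ)
    (y : ℝ → ℝ) (hy : ∀ t : ℝ, y t = φ t ⬝ᵥ θ)
    (F : ℝ → Matrix (Fin q) (Fin q) ℝ)
    (hFinv : ∀ t : ℝ, IsUnit (F t))
    (hF : ∀ t : ℝ, HasDerivAt F (-(F t * vecMulVec (φ t) (φ t) * F t)) t)
    (θh : ℝ → Fin q → ℝ)
    (hθh : ∀ t : ℝ, HasDerivAt θh ((y t - φ t ⬝ᵥ θh t) • (F t *ᵥ φ t)) t)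
    (Tc ρ : ℝ) (hTc : 0 < Tc) (hρ : 0 < ρ)
    (hIE : ((∫ τ in (0:ℝ)..Tc, vecMulVec (φ τ) (φ τ)) -
        ρ • (1 : Matrix (Fin q) (Fin q) ℝ)).PosSemidef) :
    ∀ t : ℝ, Tc ≤ t →
      IsUnit ((1 : Matrix (Fin q) (Fin q) ℝ) - F t * (F 0)⁻¹) ∧
      θ = ((1 : Matrix (Fin q) (Fin q) ℝ) - F t * (F 0)⁻¹)⁻¹ *ᵥ
          (θh t - (F t * (F 0)⁻¹) *ᵥ θh 0) := by
  set Φ : ℝ → Matrix (Fin q) (Fin q) ℝ := fun s => vecMulVec (φ s) (φ s) with hΦdef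
  have hΦc : Continuous Φ := hφ.matrix_vecMulVec hφ
  have hΦint : ∀ a b : ℝ, IntervalIntegrable Φ volume a b := fun a b =>
    hΦc.intervalIntegrable a b
  set G : ℝ → Matrix (Fin q) (Fin q) ℝ := fun s => (F s)⁻¹ with hGdef
  have hdetF : ∀ s, IsUnit ((F s).det) := fun s =>
    (Matrix.isUnit_iff_isUnit_det (F s)).mp (hFinv s)
  have hFG : ∀ s, F s * G s = 1 := fun s => Matrix.mul_nonsing_inv _ (hdetF s)
  have hGF : ∀ s, G s * F s = 1 := fun s => Matrix.nonsing_inv_mul _ (hdetF s)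
  have hFentry : ∀ s : ℝ, ∀ i j, DifferentiableAt ℝ (fun u => F u i j) s := fun s i j =>
    (hasDerivAt_pi.mp (hasDerivAt_pi.mp (hF s) i) j).differentiableAt
  have hGdiff : ∀ s : ℝ, DifferentiableAt ℝ G s := fun s =>
    inv_differentiableAt' (hFentry s) (hdetF s)
  -- derivative of the inverse is Φ
  have hG : ∀ s : ℝ, HasDerivAt G (Φ s) s := by
    intro s
    have hG0 := (hGdiff s).hasDerivAt
    have hprod := matrix_mul_hasDerivAt' (hF s) hG0
    have hconst : HasDerivAt (fun u => F u * G u) 0 s := by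
      have he : (fun u => F u * G u) = fun _ => (1 : Matrix (Fin q) (Fin q) ℝ) :=
        funext hFG
      rw [he]; exact hasDerivAt_const s 1
    have heq := hconst.unique hprod
    have h2 : F s * deriv G s = F s * Φ s := by
      have h' : -(F s * Φ s * F s * G s) + F s * deriv G s = 0 := by
        rw [← Matrix.neg_mul]; exact heq.symm
      have h3 : F s * deriv G s = F s * Φ s * F s * G s :=
        (neg_add_eq_zero.mp h').symm
      rw [h3, mul_assoc (F s * Φ s), hFG s, mul_one]
    have h5 : deriv G s = Φ s := by
      have := congrArg (fun M => G s * M) h2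
      simpa only [← mul_assoc, hGF s, one_mul] using this
    rw [← h5]; exact hG0
  -- FTC
  have hFTC : ∀ a b : ℝ, (∫ τ in a..b, Φ τ) = G b - G a := fun a b =>
    intervalIntegral.integral_eq_sub_of_hasDerivAt (fun x _ => hG x) (hΦint a b)
  -- constancy of G s *ᵥ (θh s - θ)
  set w : ℝ → Fin q → ℝ := fun s => G s *ᵥ (θh s - θ) with hwdef
  have hw : ∀ s : ℝ, HasDerivAt w 0 s := by
    intro s
    have hv : HasDerivAt (fun u => θh u - θ) ((y s - φ s ⬝ᵥ θh s) • (F s *ᵥ φ s)) s :=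
      (hθh s).sub_const θ
    have h := mulVec_hasDerivAt' (hG s) hv
    have e1 : Φ s *ᵥ (θh s - θ) = (φ s ⬝ᵥ (θh s - θ)) • φ s := vecMulVec_mulVec' _ _
    have e2 : G s *ᵥ ((y s - φ s ⬝ᵥ θh s) • (F s *ᵥ φ s))
        = (y s - φ s ⬝ᵥ θh s) • φ s := by
      rw [Matrix.mulVec_smul, Matrix.mulVec_mulVec, hGF s, Matrix.one_mulVec]
    have e3 : y s - φ s ⬝ᵥ θh s = -(φ s ⬝ᵥ (θh s - θ)) := by
      rw [hy s, dotProduct_sub]; ring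
    have : Φ s *ᵥ (θh s - θ) + G s *ᵥ ((y s - φ s ⬝ᵥ θh s) • (F s *ᵥ φ s)) = 0 := by
      rw [e1, e2, e3, neg_smul, add_neg_cancel]
    rw [← this]
    exact h
  have hwconst : ∀ s : ℝ, w s = w 0 := by
    intro s
    exact is_const_of_deriv_eq_zero (fun u => (hw u).differentiableAt)
      (fun u => (hw u).deriv) s 0
  intro t ht
  -- invertibility
  have hS2 : (∫ τ in Tc..t, Φ τ).PosSemidef :=
    posSemidef_intervalIntegral_vecMulVec hφ ht
  have hsplit : (∫ τ in (0:ℝ)..t, Φ τ)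
      = (∫ τ in (0:ℝ)..Tc, Φ τ) + ∫ τ in Tc..t, Φ τ :=
    (intervalIntegral.integral_add_adjacent_intervals (hΦint 0 Tc) (hΦint Tc t)).symm
  have hSpos : (∫ τ in (0:ℝ)..t, Φ τ).PosDef := by
    have h1 : ((∫ τ in (0:ℝ)..t, Φ τ) - ρ • (1 : Matrix (Fin q) (Fin q) ℝ)).PosSemidef := by
      rw [hsplit]
      have : (∫ τ in (0:ℝ)..Tc, Φ τ) + (∫ τ in Tc..t, Φ τ)
          - ρ • (1 : Matrix (Fin q) (Fin q) ℝ)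
          = ((∫ τ in (0:ℝ)..Tc, Φ τ) - ρ • (1 : Matrix (Fin q) (Fin q) ℝ))
            + ∫ τ in Tc..t, Φ τ := by abel
      rw [this]
      exact hIE.add hS2
    have h2 : (ρ • (1 : Matrix (Fin q) (Fin q) ℝ)).PosDef := by
      rw [Matrix.smul_one_eq_diagonal]
      exact Matrix.PosDef.diagonal fun _ => hρ
    have h3 : (∫ τ in (0:ℝ)..t, Φ τ)
        = ((∫ τ in (0:ℝ)..t, Φ τ) - ρ • (1 : Matrix (Fin q) (Fin q) ℝ))
          + ρ • (1 : Matrix (Fin q) (Fin q) ℝ) := by abel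
    rw [h3]
    exact Matrix.PosDef.posSemidef_add h1 h2
  have hkey : (1 : Matrix (Fin q) (Fin q) ℝ) - F t * G 0 = F t * ∫ τ in (0:ℝ)..t, Φ τ := by
    rw [hFTC 0 t, mul_sub, hFG t]
  have hunit : IsUnit ((1 : Matrix (Fin q) (Fin q) ℝ) - F t * G 0) := by
    rw [hkey]
    exact (hFinv t).mul hSpos.isUnit
  refine ⟨hunit, ?_⟩
  -- recovery formula
  have hc := hwconst t
  have happ := congrArg (fun v => F t *ᵥ v) hc
  simp only [hwdef, Matrix.mulVec_mulVec] at happ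
  rw [hFG t, Matrix.one_mulVec] at happ
  -- happ : θh t - θ = (F t * G 0) *ᵥ (θh 0 - θ)
  set B : Matrix (Fin q) (Fin q) ℝ := F t * G 0 with hBdef
  have hlin : ((1 : Matrix (Fin q) (Fin q) ℝ) - B) *ᵥ θ = θh t - B *ᵥ θh 0 := by
    rw [Matrix.sub_mulVec, Matrix.one_mulVec]
    rw [Matrix.mulVec_sub] at happ
    funext i
    have := congrFun happ i
    simp only [Pi.sub_apply] at this ⊢
    linarith
  have hfinal : θ = ((1 : Matrix (Fin q) (Fin q) ℝ) - B)⁻¹ *ᵥ (θh t - B *ᵥ θh 0) := by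
    rw [← hlin, Matrix.mulVec_mulVec,
      Matrix.nonsing_inv_mul _ ((Matrix.isUnit_iff_isUnit_det _).mp hunit),
      Matrix.one_mulVec]
  exact hfinal
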